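/- Fix S₀ > 0, define erfc(x) = (2/√π)·∫_x^∞ e^{−τ²} dτ, set A = (1/2)·S₀³·e^{S₀²/4} and T∞ = −A·[(1/S₀)·e^{−S₀²/4} − (√π/2)·erfc(S₀/2)], and define u(r,t) = A·[(1/s)·e^{−s²/4} − (√π/2)·erfc(s/2)] + T∞ with s = r/√t, and R(t) = S₀·√t. Then for all t > 0: (i) the isothermal condition u(R(t), t) = 0 holds, and (ii) the Stefan condition dR/dt(t) + ∂u/∂r(R(t), t) = 0 holds. -/

import Mathlib

/-!
In the similarity variable `s = r / √t` the temperature is `u = A · F(s) + T∞` with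
`F(s) = e^{-s²/4} / s - (√π/2) erfc(s/2)`. The erfc term cancels the derivative of the Gaussian
factor, leaving `F'(s) = -e^{-s²/4} / s²`. The interface sits at the fixed similarity value
`s = S₀`, so `T∞ = -A · F(S₀)` is exactly the equilibrium condition there, and
`∂u/∂r = A · F'(S₀) / √t = -S₀ / (2√t) = -R'(t)` by the choice of `A`.
-/

open MeasureTheory Set Real

theorem hasDerivAt_integral_Ioi {E : Type*} [NormedAddCommGroup E] [NormedSpace ℝ E]
    [CompleteSpace E] {f : ℝ → E} {x : ℝ} (hf : Integrable f) (hfx : ContinuousAt f x) :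
    HasDerivAt (fun y => ∫ τ in Ioi y, f τ) (-f x) x := by
  have hsplit : (fun y => ∫ τ in Ioi y, f τ) =
      fun y => (∫ τ in Ioi 0, f τ) - ∫ τ in (0 : ℝ)..y, f τ := by
    ext y
    rw [← intervalIntegral.integral_Ioi_sub_Ioi' hf.integrableOn hf.integrableOn, sub_sub_cancel]
  rw [hsplit, ← zero_sub]
  exact (hasDerivAt_const x _).sub <| intervalIntegral.integral_hasDerivAt_right
    hf.intervalIntegrable (hf.aestronglyMeasurable.stronglyMeasurableAtFilter) hfx

namespace FrankSphere

noncomputable def erfc (x : ℝ) : ℝ := (2 / √π) * ∫ τ in Ioi x, exp (-τ ^ 2)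

theorem hasDerivAt_erfc (x : ℝ) : HasDerivAt erfc (-(2 / √π) * exp (-x ^ 2)) x := by
  have hint : Integrable fun τ : ℝ => exp (-τ ^ 2) := by
    simpa using integrable_exp_neg_mul_sq one_pos
  rw [neg_mul, ← mul_neg]
  exact (hasDerivAt_integral_Ioi (x := x) hint (by fun_prop)).const_mul (2 / √π)

noncomputable def profile (s : ℝ) : ℝ := 1 / s * exp (-s ^ 2 / 4) - √π / 2 * erfc (s / 2)

theorem hasDerivAt_profile {s : ℝ} (hs : s ≠ 0) :
    HasDerivAt profile (-exp (-s ^ 2 / 4) / s ^ 2) s := by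
  have hinv : HasDerivAt (fun s : ℝ => 1 / s) (-(s ^ 2)⁻¹) s := by
    simpa only [one_div] using hasDerivAt_inv hs
  have hgauss := ((((hasDerivAt_id' s).fun_pow 2).fun_neg).div_const 4).exp
  have herfc := (hasDerivAt_erfc (s / 2)).comp s ((hasDerivAt_id' s).div_const 2)
  refine ((hinv.mul hgauss).sub (herfc.const_mul (√π / 2))).congr_deriv ?_
  have hpi : √π ≠ 0 := (sqrt_pos.mpr pi_pos).ne'
  rw [show -(s / 2) ^ 2 = -s ^ 2 / 4 by ring]
  field_simp
  ring

end FrankSphere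

open FrankSphere in
/-- The three-dimensional Frank-sphere exact solution: with
`erfc(x) = (2/√π)∫_x^∞ e^{−τ²} dτ`, `A = ½S₀³e^{S₀²/4}`,
`T∞ = −A[(1/S₀)e^{−S₀²/4} − (√π/2)erfc(S₀/2)]`,
`u(r,t) = A[(1/s)e^{−s²/4} − (√π/2)erfc(s/2)] + T∞` with `s = r/√t`, and
`R(t) = S₀√t`, the isothermal condition `u(R(t),t) = 0` and the Stefan
condition `R′(t) + u_r(R(t),t) = 0` hold for all `t > 0`. -/
theorem frank_sphere_3d_interface_conditions
    (S₀ : ℝ) (hS₀ : 0 < S₀)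
    (erfc : ℝ → ℝ)
    (herfc : erfc = fun x => (2 / Real.sqrt Real.pi) * ∫ τ in Set.Ioi x, Real.exp (-τ ^ 2))
    (A Tinf : ℝ)
    (hA : A = (1 / 2) * S₀ ^ 3 * Real.exp (S₀ ^ 2 / 4))
    (hT : Tinf = -A * ((1 / S₀) * Real.exp (-S₀ ^ 2 / 4) -
      (Real.sqrt Real.pi / 2) * erfc (S₀ / 2)))
    (u : ℝ → ℝ → ℝ)
    (hu : u = fun r t =>
      A * ((1 / (r / Real.sqrt t)) * Real.exp (-(r / Real.sqrt t) ^ 2 / 4) -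
        (Real.sqrt Real.pi / 2) * erfc ((r / Real.sqrt t) / 2)) + Tinf)
    (R : ℝ → ℝ) (hR : R = fun t => S₀ * Real.sqrt t) :
    ∀ t : ℝ, 0 < t →
      u (R t) t = 0 ∧
      deriv R t + deriv (fun r => u r t) (R t) = 0 := by
  replace hu : u = fun r t => A * profile (r / √t) + Tinf := by rw [hu, herfc]; rfl
  replace hT : Tinf = -A * profile S₀ := by rw [hT, herfc]; rfl
  subst hu hR
  intro t ht
  beta_reduce
  have hscale : S₀ * √t / √t = S₀ := mul_div_cancel_right₀ S₀ (sqrt_pos.mpr ht).ne'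
  have hRd := (hasDerivAt_sqrt ht.ne').const_mul S₀
  have hud : HasDerivAt (fun r => A * profile (r / √t) + Tinf)
      (A * (-exp (-S₀ ^ 2 / 4) / S₀ ^ 2 * (1 / √t))) (S₀ * √t) :=
    (((hasDerivAt_profile hS₀.ne').comp_of_eq (S₀ * √t) ((hasDerivAt_id' _).div_const √t)
      hscale.symm).const_mul A).add_const Tinf
  refine ⟨?_, ?_⟩
  · rw [hscale, hT]
    ring
  · rw [hRd.deriv, hud.deriv, hA, neg_div (4 : ℝ) (S₀ ^ 2), exp_neg]
    field_simp
    ring
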